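/- For each k ≥ 4 and each n ≥ 1 there exists a nilpotent evolution algebra E over F of type [1, 1, …, 1, n] (with k entries equal to 1 followed by n) which is not isomorphic to E(U, b, f_1, …, f_{k−1}) for any choice of n-dimensional F-vector space U, nondegenerate symmetric bilinear form b on U, and pairwise commuting, b-symmetric, diagonalizable endomorphisms f_1, …, f_{k−1} of U. -/

import Mathlib

/-
The algebra has natural basis `e_0, …, e_{N-1}` (`N = n + m + 1`) with `e_i² = e_n` for `i < n`,
`e_n² = e_{n+1} + e_{n+2}` and `e_i² = e_{i+1}` for `n < i` (`e_{N-1}² = 0`). Its annihilator series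
is the flag of spans of the last `j` basis vectors for `j ≤ m + 1`, and then everything, so its type
is `[1, …, 1, n]`.

In `E(U, b, f)` every product lies in `0 × F^{m+1}`, where the product is the shifted coordinatewise
product `α ⋆ β = (0, α_0 β_0, …, α_{m-1} β_{m-1})`. An isomorphism would carry `y = e_0`,
`v₁ = e_{n+1}`, `v₂ = e_{n+2}` to elements with `a ⋆ a = c + c ⋆ c`, `a ⋆ c = 0` and
`c ⋆ (c ⋆ c) = 0`. In each coordinate `z² = t + x²`, `z x = 0`, `t x² = 0` force `x = 0`, so `c`
vanishes in the coordinates below `m - 1`, and two more shifts kill `(c ⋆ c) ⋆ (c ⋆ c)`, the image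
of `e_{n+3} = v₂²`, which is nonzero since `m ≥ 3`.
-/

variable {F : Type*} [Field F] {A : Type*} [AddCommGroup A] [Module F A]

/-- For a bilinear multiplication `mul` on `A` and a submodule `S`, the preimage in `A` of the
annihilator of `A/S`, i.e. `{x | x·A ⊆ S and A·x ⊆ S}`. -/
def annSucc (mul : A →ₗ[F] A →ₗ[F] A) (S : Submodule F A) : Submodule F A where
  carrier := {x | ∀ y : A, mul x y ∈ S ∧ mul y x ∈ S}
  zero_mem' := by intro y; simp
  add_mem' := by
    intro a b ha hb y
    refine ⟨?_, ?_⟩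
    · simpa [map_add, LinearMap.add_apply] using S.add_mem (ha y).1 (hb y).1
    · simpa [map_add, LinearMap.add_apply] using S.add_mem (ha y).2 (hb y).2
  smul_mem' := by
    intro c a ha y
    refine ⟨?_, ?_⟩
    · simpa [map_smul, LinearMap.smul_apply] using S.smul_mem c (ha y).1
    · simpa [map_smul, LinearMap.smul_apply] using S.smul_mem c (ha y).2

/-- The upper annihilating series: `annSeq mul 0 = 0`, and
`annSeq mul (i+1)` is the preimage in `A` of `ann(A / annSeq mul i)`. -/
def annSeq (mul : A →ₗ[F] A →ₗ[F] A) : ℕ → Submodule F A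
  | 0 => ⊥
  | i + 1 => annSucc mul (annSeq mul i)

/-- A basis is natural if the product of distinct basis vectors vanishes. -/
def IsNaturalBasis {ι : Type*} (mul : A →ₗ[F] A →ₗ[F] A) (e : Module.Basis ι F A) : Prop :=
  ∀ i j, i ≠ j → mul (e i) (e j) = 0

/-- An evolution algebra: a commutative algebra admitting a natural basis. -/
def IsEvolutionAlgebra (mul : A →ₗ[F] A →ₗ[F] A) : Prop :=
  (∀ x y, mul x y = mul y x) ∧ ∃ (n : ℕ) (e : Module.Basis (Fin n) F A), IsNaturalBasis mul e

/-- The (nilpotent) algebra `(A, mul)` has type `[n_1, …, n_r]`:  `r` is the least index with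
`ann^r(A) = A` and `n_i = dim ann^i(A) - dim ann^{i-1}(A)`. -/
def HasType (mul : A →ₗ[F] A →ₗ[F] A) (L : List ℕ) : Prop :=
  annSeq mul L.length = ⊤ ∧ (∀ j < L.length, annSeq mul j ≠ ⊤) ∧
  ∀ (i : ℕ) (h : i < L.length),
    L.get ⟨i, h⟩ =
      Module.finrank F (annSeq mul (i + 1)) - Module.finrank F (annSeq mul i)

def vanishingBelow (N c : ℕ) : Submodule F (Fin N → F) :=
  ⨅ l ∈ {l : Fin N | (l : ℕ) < c}, LinearMap.ker (LinearMap.proj l)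

theorem mem_vanishingBelow {N c : ℕ} {x : Fin N → F} :
    x ∈ vanishingBelow N c ↔ ∀ l : Fin N, (l : ℕ) < c → x l = 0 := by
  simp [vanishingBelow]

theorem finrank_vanishingBelow (N c : ℕ) :
    Module.finrank F (vanishingBelow (F := F) N c) = N - c := by
  classical
  let e := LinearMap.iInfKerProjEquiv F (fun _ : Fin N => F)
    (I := {l : Fin N | (l : ℕ) < c}ᶜ) (J := {l | (l : ℕ) < c}) disjoint_compl_left (by simp)
  rw [vanishingBelow, e.finrank_eq, Module.finrank_fintype_fun_eq_card, Fintype.card_compl_set,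
    Fintype.card_fin, Fintype.card_subtype]
  simp only [Set.mem_ofPred_eq, Fin.card_filter_val_lt]
  omega

theorem vanishingBelow_eq_bot {N c : ℕ} (h : N ≤ c) : vanishingBelow (F := F) N c = ⊥ :=
  eq_bot_iff.2 fun x hx => funext fun l => mem_vanishingBelow.1 hx l (by omega)

theorem hasType_replicate_one_append [FiniteDimensional F A] (mul : A →ₗ[F] A →ₗ[F] A)
    {k n : ℕ} (hn : 1 ≤ n) (hdim : Module.finrank F A = k + n)
    (hrank : ∀ j ≤ k, Module.finrank F (annSeq mul j) = j) (htop : annSeq mul (k + 1) = ⊤) :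
    HasType mul (List.replicate k 1 ++ [n]) := by
  have hlen : (List.replicate k 1 ++ [n]).length = k + 1 := by simp
  refine ⟨hlen ▸ htop, fun j hj htop' => ?_, fun i hi => ?_⟩
  · have := hrank j (by omega)
    rw [htop', finrank_top] at this
    omega
  · rw [hlen] at hi
    rcases Nat.lt_succ_iff_lt_or_eq.1 hi with hi | rfl
    · simp [List.getElem_append_left, hi, hrank i hi.le, hrank (i + 1) hi]
    · rw [List.get_eq_getElem, hrank i le_rfl, htop, finrank_top, hdim]
      simp

section EvolutionMul

variable {ι : Type*} [Fintype ι]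

def evolutionMul (s : ι → ι → F) : (ι → F) →ₗ[F] (ι → F) →ₗ[F] (ι → F) :=
  (LinearMap.mul F (ι → F)).compr₂ (Fintype.linearCombination F s)

theorem evolutionMul_apply (s : ι → ι → F) (x y : ι → F) :
    evolutionMul s x y = ∑ i, (x i * y i) • s i := by
  simp [evolutionMul, Fintype.linearCombination_apply]

theorem evolutionMul_comm (s : ι → ι → F) (x y : ι → F) :
    evolutionMul s x y = evolutionMul s y x := by
  simp only [evolutionMul_apply, mul_comm]

theorem evolutionMul_single [DecidableEq ι] (s : ι → ι → F) (x : ι → F) (i : ι) :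
    evolutionMul s x (Pi.single i 1) = x i • s i := by
  rw [evolutionMul_apply, Finset.sum_eq_single i] <;> simp +contextual

theorem evolutionMul_single_self [DecidableEq ι] (s : ι → ι → F) (i : ι) :
    evolutionMul s (Pi.single i 1) (Pi.single i 1) = s i := by
  simp [evolutionMul_single]

theorem evolutionMul_single_single_of_ne [DecidableEq ι] (s : ι → ι → F) {i j : ι} (h : i ≠ j) :
    evolutionMul s (Pi.single i 1) (Pi.single j 1) = 0 := by
  simp [evolutionMul_single, h]

theorem isEvolutionAlgebra_evolutionMul {N : ℕ} (s : Fin N → Fin N → F) :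
    IsEvolutionAlgebra (evolutionMul s) :=
  ⟨evolutionMul_comm s, N, Pi.basisFun F (Fin N), fun i j hij => by
    simpa using evolutionMul_single_single_of_ne s hij⟩

theorem mem_annSucc_evolutionMul {s : ι → ι → F} {S : Submodule F (ι → F)} {x : ι → F} :
    x ∈ annSucc (evolutionMul s) S ↔ ∀ i, x i ≠ 0 → s i ∈ S := by
  classical
  have hmem : x ∈ annSucc (evolutionMul s) S ↔ ∀ i, x i • s i ∈ S := by
    refine ⟨fun h i => evolutionMul_single s x i ▸ (h _).1, fun h y => ?_⟩
    have hS : ∀ z, evolutionMul s x z ∈ S := fun z => by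
      rw [evolutionMul_apply]
      exact S.sum_mem fun i _ => by rw [mul_comm, mul_smul]; exact S.smul_mem _ (h i)
    exact ⟨hS y, evolutionMul_comm s y x ▸ hS y⟩
  refine hmem.trans (forall_congr' fun i => ?_)
  by_cases hx : x i = 0
  · simp [hx]
  · simp [hx, S.smul_mem_iff hx]

end EvolutionMul

-- `chainSq n N i = e_i²`: `e_n` for `i < n`, `e_{n+1} + e_{n+2}` for `i = n`, `e_{i+1}` after.
def chainSq (n N : ℕ) (i l : Fin N) : F :=
  if (i : ℕ) < n ∧ (l : ℕ) = n ∨ (i : ℕ) = n ∧ (l : ℕ) = n + 2 ∨ n ≤ (i : ℕ) ∧ (l : ℕ) = i + 1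
  then 1 else 0

section ChainSq

variable {n N : ℕ}

theorem chainSq_mem_vanishingBelow_of_le {c : ℕ} (hc : c ≤ n) (i : Fin N) :
    chainSq (F := F) n N i ∈ vanishingBelow N c :=
  mem_vanishingBelow.2 fun l hl => if_neg (by omega)

theorem chainSq_mem_vanishingBelow_iff {c : ℕ} (hnc : n < c) (hcN : c ≤ N) (i : Fin N) :
    chainSq (F := F) n N i ∈ vanishingBelow N c ↔ c - 1 ≤ i := by
  refine ⟨fun h => by_contra fun hi => ?_,
    fun hi => mem_vanishingBelow.2 fun l hl => if_neg (by omega)⟩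
  have := mem_vanishingBelow.1 h ⟨max n (i + 1), by omega⟩ (show max n (i + 1) < c by omega)
  simp only [chainSq] at this
  rw [if_pos (by omega)] at this
  exact one_ne_zero this

theorem annSucc_chainSq_of_le {c : ℕ} (hc : c ≤ n) :
    annSucc (evolutionMul (chainSq (F := F) n N)) (vanishingBelow N c) = ⊤ :=
  eq_top_iff.2 fun _ _ =>
    mem_annSucc_evolutionMul.2 fun i _ => chainSq_mem_vanishingBelow_of_le hc i

theorem annSucc_chainSq_of_lt {c : ℕ} (hnc : n < c) (hcN : c ≤ N) :
    annSucc (evolutionMul (chainSq (F := F) n N)) (vanishingBelow N c) =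
      vanishingBelow N (c - 1) := by
  ext x
  simp only [mem_annSucc_evolutionMul, chainSq_mem_vanishingBelow_iff hnc hcN, mem_vanishingBelow]
  exact ⟨fun h l hl => by_contra fun hx => absurd (h l hx) (by omega),
    fun h i hx => by_contra fun hi => hx (h i (by omega))⟩

theorem annSeq_chainSq {k j : ℕ} (hj : j ≤ k) :
    annSeq (evolutionMul (chainSq (F := F) n (n + k))) j = vanishingBelow (n + k) (n + k - j) := by
  induction j with
  | zero => exact (vanishingBelow_eq_bot le_rfl).symm
  | succ j ih =>
    rw [annSeq, ih (by omega), annSucc_chainSq_of_lt (by omega) (by omega)]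
    rfl

theorem hasType_chainSq (n k : ℕ) (hn : 1 ≤ n) :
    HasType (evolutionMul (chainSq (F := F) n (n + k))) (List.replicate k 1 ++ [n]) := by
  refine hasType_replicate_one_append _ hn (by simp [add_comm]) (fun j hj => ?_) ?_
  · rw [annSeq_chainSq hj, finrank_vanishingBelow]
    omega
  · rw [annSeq, annSeq_chainSq le_rfl, annSucc_chainSq_of_le (by omega)]


theorem chainSq_of_lt {i : Fin N} (hi : (i : ℕ) < n) (hn : n < N) :
    chainSq (F := F) n N i = Pi.single ⟨n, hn⟩ 1 := by
  funext l
  simp only [chainSq, Pi.single_apply, Fin.ext_iff]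
  split_ifs <;> first | rfl | omega

theorem chainSq_self (h : n + 2 < N) :
    chainSq (F := F) n N ⟨n, by omega⟩ =
      Pi.single ⟨n + 1, by omega⟩ 1 + Pi.single ⟨n + 2, h⟩ 1 := by
  funext l
  simp only [chainSq, Pi.add_apply, Pi.single_apply, Fin.ext_iff]
  split_ifs <;> simp_all

theorem chainSq_of_gt {i : Fin N} (hi : n < (i : ℕ)) (h : (i : ℕ) + 1 < N) :
    chainSq (F := F) n N i = Pi.single ⟨i + 1, h⟩ 1 := by
  funext l
  simp only [chainSq, Pi.single_apply, Fin.ext_iff]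
  split_ifs <;> first | rfl | omega

end ChainSq

def HasForkedChain (mul : A →ₗ[F] A →ₗ[F] A) : Prop :=
  ∃ y v₁ v₂ : A, mul (mul y y) (mul y y) = v₁ + v₂ ∧ mul v₁ v₁ = v₂ ∧
    mul (mul y y) v₁ = 0 ∧ mul v₁ v₂ = 0 ∧ mul v₂ v₂ ≠ 0

theorem HasForkedChain.map {B : Type*} [AddCommGroup B] [Module F B]
    {mulA : A →ₗ[F] A →ₗ[F] A} {mulB : B →ₗ[F] B →ₗ[F] B} (φ : A ≃ₗ[F] B)
    (hφ : ∀ x y, φ (mulA x y) = mulB (φ x) (φ y)) (h : HasForkedChain mulA) :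
    HasForkedChain mulB := by
  obtain ⟨y, v₁, v₂, h₀, h₁, h₀₁, h₁₂, h₂⟩ := h
  refine ⟨φ y, φ v₁, φ v₂, ?_, ?_, ?_, ?_, ?_⟩ <;> simp only [← hφ, ← map_add]
  · rw [h₀]
  · rw [h₁]
  · rw [h₀₁, map_zero]
  · rw [h₁₂, map_zero]
  · exact φ.map_ne_zero_iff.2 h₂

theorem hasForkedChain_chainSq {n N : ℕ} (hn : 0 < n) (hN : n + 4 ≤ N) :
    HasForkedChain (evolutionMul (chainSq (F := F) n N)) := by
  refine ⟨Pi.single ⟨0, by omega⟩ 1, Pi.single ⟨n + 1, by omega⟩ 1,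
    Pi.single ⟨n + 2, by omega⟩ 1, ?_, ?_, ?_, ?_, ?_⟩
  · rw [evolutionMul_single_self, chainSq_of_lt hn (by omega), evolutionMul_single_self,
      chainSq_self]
  · rw [evolutionMul_single_self, chainSq_of_gt (by simp) (by simp; omega)]
  · rw [evolutionMul_single_self, chainSq_of_lt hn (by omega),
      evolutionMul_single_single_of_ne _ (by simp [Fin.ext_iff])]
  · exact evolutionMul_single_single_of_ne _ (by simp [Fin.ext_iff])
  · rw [evolutionMul_single_self, chainSq_of_gt (by simp) (by simp; omega)]
    exact Pi.single_ne_zero_iff.2 one_ne_zero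

theorem eq_zero_of_mul_self_eq_add_mul_self {R : Type*} [Ring R] [NoZeroDivisors R] {x y z : R}
    (h : z * z = y + x * x) (hzx : z * x = 0) (hyx : y * (x * x) = 0) : x = 0 := by
  by_contra hx
  have hz : z = 0 := (mul_eq_zero.1 hzx).resolve_right hx
  have hy : y = 0 := (mul_eq_zero.1 hyx).resolve_right (mul_self_ne_zero.2 hx)
  rw [hz, hy, zero_mul, zero_add, eq_comm, mul_self_eq_zero] at h
  exact hx h

section ShiftMul

variable {k : ℕ}

-- The product of `E(U, b, f)` on elements with zero `U`-component.
def shiftMul (a b : Fin (k + 1) → F) : Fin (k + 1) → F :=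
  Fin.cases 0 fun j => a j.castSucc * b j.castSucc

theorem shiftMul_apply_succ (a b : Fin (k + 1) → F) {i : ℕ} (hi : i < k) :
    shiftMul a b ⟨i + 1, by omega⟩ = a ⟨i, by omega⟩ * b ⟨i, by omega⟩ :=
  rfl

theorem shiftMul_mem_vanishingBelow_succ {c : ℕ} {a : Fin (k + 1) → F}
    (ha : a ∈ vanishingBelow (k + 1) c) (b : Fin (k + 1) → F) :
    shiftMul a b ∈ vanishingBelow (k + 1) (c + 1) := by
  refine mem_vanishingBelow.2 fun l hl => ?_
  cases l using Fin.cases with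
  | zero => rfl
  | succ j =>
    have hj : a j.castSucc = 0 := mem_vanishingBelow.1 ha _ (by simp at hl ⊢; omega)
    simp only [shiftMul, Fin.cases_succ, hj, zero_mul]

theorem shiftMul_shiftMul_self_eq_zero {a c : Fin (k + 1) → F}
    (h₀ : shiftMul a a = c + shiftMul c c) (h₁ : shiftMul a c = 0)
    (h₂ : shiftMul c (shiftMul c c) = 0) : shiftMul (shiftMul c c) (shiftMul c c) = 0 := by
  have hc : c ∈ vanishingBelow (k + 1) (k - 1) := mem_vanishingBelow.2 fun l hl => by
    obtain ⟨i, _⟩ := l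
    replace hl : i < k - 1 := hl
    have e₀ := congrFun h₀ ⟨i + 1, by omega⟩
    have e₁ := congrFun h₁ ⟨i + 1, by omega⟩
    have e₂ := congrFun h₂ ⟨i + 2, by omega⟩
    rw [Pi.add_apply, shiftMul_apply_succ _ _ (by omega), shiftMul_apply_succ _ _ (by omega)] at e₀
    rw [shiftMul_apply_succ _ _ (by omega)] at e₁
    rw [shiftMul_apply_succ _ _ (by omega), shiftMul_apply_succ _ _ (by omega)] at e₂
    exact eq_zero_of_mul_self_eq_add_mul_self e₀ e₁ e₂
  have hcc : shiftMul c c ∈ vanishingBelow (k + 1) k := by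
    have := shiftMul_mem_vanishingBelow_succ hc c
    exact mem_vanishingBelow.2 fun l hl => mem_vanishingBelow.1 this l (by omega)
  have := shiftMul_mem_vanishingBelow_succ hcc (shiftMul c c)
  rwa [vanishingBelow_eq_bot le_rfl, Submodule.mem_bot] at this

end ShiftMul

section IsEMul

variable {U : Type*} [AddCommGroup U] [Module F U] {m : ℕ}

def IsEMul (b : U →ₗ[F] U →ₗ[F] F) (f : Fin m → U →ₗ[F] U)
    (mul : (U × (Fin (m + 1) → F)) →ₗ[F] (U × (Fin (m + 1) → F)) →ₗ[F] (U × (Fin (m + 1) → F))) :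
    Prop :=
  ∀ (x y : U) (α β : Fin (m + 1) → F),
    mul (x, α) (y, β) =
      (0, Fin.cases (motive := fun _ => F) (b x y)
        (fun j : Fin m => b (f j x) y + α j.castSucc * β j.castSucc))

variable {b : U →ₗ[F] U →ₗ[F] F} {f : Fin m → U →ₗ[F] U}
  {mul : (U × (Fin (m + 1) → F)) →ₗ[F] (U × (Fin (m + 1) → F)) →ₗ[F] (U × (Fin (m + 1) → F))}

theorem IsEMul.fst_eq_zero (h : IsEMul b f mul) (p q : U × (Fin (m + 1) → F)) :
    (mul p q).1 = 0 := by
  rw [← Prod.mk.eta (p := p), ← Prod.mk.eta (p := q), h]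

theorem IsEMul.eq_shiftMul (h : IsEMul b f mul) {p : U × (Fin (m + 1) → F)} (hp : p.1 = 0)
    (q : U × (Fin (m + 1) → F)) : mul p q = (0, shiftMul p.2 q.2) := by
  rw [← Prod.mk.eta (p := p), ← Prod.mk.eta (p := q), h, hp]
  simp only [map_zero, LinearMap.zero_apply, zero_add]
  rfl

theorem IsEMul.not_hasForkedChain (h : IsEMul b f mul) : ¬ HasForkedChain mul := by
  rintro ⟨y, v₁, v₂, h₀, rfl, h₀₁, h₁₂, h₂⟩
  have hv₀ : (mul y y).1 = 0 := h.fst_eq_zero y y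
  have hv₁ : v₁.1 = 0 := by simpa [h.fst_eq_zero] using (congrArg Prod.fst h₀).symm
  have hsq : mul v₁ v₁ = (0, shiftMul v₁.2 v₁.2) := h.eq_shiftMul hv₁ v₁
  rw [hsq, h.eq_shiftMul hv₀] at h₀
  rw [h.eq_shiftMul hv₀] at h₀₁
  rw [hsq, h.eq_shiftMul hv₁] at h₁₂
  rw [hsq, h.eq_shiftMul (p := (0, _)) rfl] at h₂
  exact h₂ (Prod.ext rfl (shiftMul_shiftMul_self_eq_zero (congrArg Prod.snd h₀)
    (congrArg Prod.snd h₀₁) (congrArg Prod.snd h₁₂)))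

end IsEMul

theorem exists_type1n_not_iso_EUbf_general
    (F : Type*) [Field F]
    (m n : ℕ) (hm : 3 ≤ m) (hn : 1 ≤ n) :  -- `k = m + 1 ≥ 4`
    ∃ mul : (Fin (n + (m + 1)) → F) →ₗ[F] (Fin (n + (m + 1)) → F) →ₗ[F] (Fin (n + (m + 1)) → F),
      IsEvolutionAlgebra mul ∧ HasType mul (List.replicate (m + 1) 1 ++ [n]) ∧
      ∀ (U : Type*) (_ : AddCommGroup U) (_ : Module F U),
        Module.finrank F U = n →
        ∀ b : U →ₗ[F] U →ₗ[F] F, (∀ x y : U, b x y = b y x) →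
          (∀ x : U, (∀ y : U, b x y = 0) → x = 0) →
        ∀ f : Fin m → U →ₗ[F] U,
          (∀ i j, (f i).comp (f j) = (f j).comp (f i)) →
          (∀ (i : Fin m) (x y : U), b (f i x) y = b x (f i y)) →
          (∀ i : Fin m, ∃ e : Module.Basis (Fin n) F U, ∀ j, ∃ μ : F, f i (e j) = μ • e j) →
        ∀ mul' : (U × (Fin (m + 1) → F)) →ₗ[F] (U × (Fin (m + 1) → F)) →ₗ[F]
            (U × (Fin (m + 1) → F)),
          (∀ (x y : U) (α β : Fin (m + 1) → F),
            mul' (x, α) (y, β) =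
              (0, Fin.cases (motive := fun _ => F) (b x y)
                  (fun j : Fin m => b (f j x) y + α j.castSucc * β j.castSucc))) →
          ¬ ∃ φ : (Fin (n + (m + 1)) → F) ≃ₗ[F] (U × (Fin (m + 1) → F)),
              ∀ x y, φ (mul x y) = mul' (φ x) (φ y) := by
  refine ⟨evolutionMul (chainSq n (n + (m + 1))), isEvolutionAlgebra_evolutionMul _,
    hasType_chainSq n (m + 1) hn, ?_⟩
  rintro U _ _ - b - - f - - - mul' hmul' ⟨φ, hφ⟩
  exact IsEMul.not_hasForkedChain (b := b) (f := f) hmul'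
    ((hasForkedChain_chainSq hn (by omega)).map φ hφ)

/-- Over an algebraically closed field `F` of characteristic ≠ 2, for each
`k = m + 1 ≥ 4` and `n ≥ 1` there is a nilpotent evolution algebra of type `[1,…,1,n]`
(`k` ones followed by `n`) which is not isomorphic to `E(U, b, f_1, …, f_{k-1})` for any
`n`-dimensional `U`, nondegenerate symmetric bilinear `b`, and pairwise commuting, `b`-symmetric,
diagonalizable endomorphisms `f_1, …, f_{k-1}`. -/
theorem exists_type1n_not_iso_EUbf
    (F : Type*) [Field F] [IsAlgClosed F] (h2 : (2 : F) ≠ 0)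
    (m n : ℕ) (hm : 3 ≤ m) (hn : 1 ≤ n) :  -- `k = m + 1 ≥ 4`
    ∃ mul : (Fin (n + (m + 1)) → F) →ₗ[F] (Fin (n + (m + 1)) → F) →ₗ[F] (Fin (n + (m + 1)) → F),
      IsEvolutionAlgebra mul ∧ HasType mul (List.replicate (m + 1) 1 ++ [n]) ∧
      ∀ (U : Type*) (_ : AddCommGroup U) (_ : Module F U),
        Module.finrank F U = n →
        ∀ b : U →ₗ[F] U →ₗ[F] F, (∀ x y : U, b x y = b y x) →
          (∀ x : U, (∀ y : U, b x y = 0) → x = 0) →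
        ∀ f : Fin m → U →ₗ[F] U,
          (∀ i j, (f i).comp (f j) = (f j).comp (f i)) →
          (∀ (i : Fin m) (x y : U), b (f i x) y = b x (f i y)) →
          (∀ i : Fin m, ∃ e : Module.Basis (Fin n) F U, ∀ j, ∃ μ : F, f i (e j) = μ • e j) →
        ∀ mul' : (U × (Fin (m + 1) → F)) →ₗ[F] (U × (Fin (m + 1) → F)) →ₗ[F]
            (U × (Fin (m + 1) → F)),
          (∀ (x y : U) (α β : Fin (m + 1) → F),
            mul' (x, α) (y, β) =
              (0, Fin.cases (motive := fun _ => F) (b x y)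
                  (fun j : Fin m => b (f j x) y + α j.castSucc * β j.castSucc))) →
          ¬ ∃ φ : (Fin (n + (m + 1)) → F) ≃ₗ[F] (U × (Fin (m + 1) → F)),
              ∀ x y, φ (mul x y) = mul' (φ x) (φ y) :=
  exists_type1n_not_iso_EUbf_general F m n hm hn
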